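/- Let T > 0, K ∈ ℝ, and suppose KT/(2π) is not an odd integer. If x : ℝ → ℝ^{2n} is differentiable and satisfies −J·ẋ(t) + K·x(t) = 0 and x(t + T/2) = −x(t) for all t ∈ ℝ, then x(t) = 0 for all t. -/

import Mathlib

/-!
Since `J² = -1`, the equation `-J ẋ + K x = 0` is `ẋ = -K J x`, whose solutions are the rotations
`x t = cos (K t) • x 0 - sin (K t) • J (x 0)`. Pairing the antiperiodicity relation at `t = 0` with
`x 0` and using `⟪J v, v⟫ = 0` gives `(cos (K T / 2) + 1) ‖x 0‖² = 0`; when `K T / (2π)` is not odd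
the cosine is not `-1`, so `x 0 = 0` and the rotation formula gives `x ≡ 0`.
-/

open Set Filter

noncomputable section

/-- `ℝ^{2n}`, written with index type `Fin n ⊕ Fin n`. -/
abbrev Esp (n : ℕ) := EuclideanSpace ℝ (Fin n ⊕ Fin n)

/-- The standard symplectic matrix `J = [[0, −I_n],[I_n, 0]]`. -/
def Jmat (n : ℕ) : Matrix (Fin n ⊕ Fin n) (Fin n ⊕ Fin n) ℝ :=
  Matrix.fromBlocks 0 (-1) 1 0

/-- `J` as a continuous linear map on `ℝ^{2n}`. -/
def Jc (n : ℕ) : Esp n →L[ℝ] Esp n :=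
  LinearMap.toContinuousLinearMap (Matrix.toEuclideanLin (Jmat n))

open RealInnerProductSpace Real

theorem Jmat_eq_J (n : ℕ) : Jmat n = Matrix.J (Fin n) ℝ := rfl

theorem Jc_Jc (n : ℕ) (v : Esp n) : Jc n (Jc n v) = -v := by
  apply (WithLp.equiv 2 _).injective
  simp [Jc, Matrix.mulVec_mulVec, Jmat_eq_J, Matrix.J_squared, Matrix.neg_mulVec]

theorem inner_Jc_self (n : ℕ) (v : Esp n) : ⟪Jc n v, v⟫ = 0 := by
  have hskew : ⟪Jc n v, v⟫ = -⟪v, Jc n v⟫ := by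
    simp only [EuclideanSpace.inner_eq_star_dotProduct, star_trivial, Jc,
      LinearMap.coe_toContinuousLinearMap', Matrix.ofLp_toLpLin, Matrix.toLin'_apply]
    rw [Matrix.dotProduct_mulVec, ← Matrix.mulVec_transpose, Jmat_eq_J,
      Matrix.J_transpose, Matrix.neg_mulVec, neg_dotProduct, dotProduct_comm]
  linarith [real_inner_comm v (Jc n v)]

theorem exists_odd_mul_pi_eq_of_cos_eq_neg_one {θ : ℝ} (h : cos θ = -1) :
    ∃ k : ℤ, Odd k ∧ (k : ℝ) * π = θ := by
  obtain ⟨m, hm⟩ := (cos_eq_one_iff (θ + π)).1 (by rw [cos_add_pi, h, neg_neg])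
  exact ⟨2 * m - 1, ⟨m - 1, by ring⟩, by push_cast; linarith⟩

section RotationFlow

variable {E : Type*} [NormedAddCommGroup E] [InnerProductSpace ℝ E] {J : E →L[ℝ] E}

theorem hasDerivAt_of_neg_apply_deriv_add_smul_eq_zero (hJ : ∀ v, J (J v) = -v) {K : ℝ}
    {x : ℝ → E} (hx : Differentiable ℝ x) (heq : ∀ t, -(J (deriv x t)) + K • x t = 0) (t : ℝ) :
    HasDerivAt x (-(K • J (x t))) t := by
  have hJx : J (deriv x t) = K • x t := neg_add_eq_zero.1 (heq t)
  have hderiv : deriv x t = -(K • J (x t)) := by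
    rw [← map_smul, ← hJx, hJ, neg_neg]
  exact hderiv ▸ (hx t).hasDerivAt

theorem hasDerivAt_cos_smul_sub_sin_smul (hJ : ∀ v, J (J v) = -v) (K : ℝ) (v : E) (t : ℝ) :
    HasDerivAt (fun t => cos (K * t) • v - sin (K * t) • J v)
      (-(K • J (cos (K * t) • v - sin (K * t) • J v))) t := by
  have hKt : HasDerivAt (fun t => K * t) K t := by simpa using (hasDerivAt_id t).const_mul K
  have h := (hKt.cos.smul_const v).sub (hKt.sin.smul_const (J v))
  refine h.congr_deriv ?_
  rw [map_sub, map_smul, map_smul, hJ]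
  module

theorem eq_cos_smul_sub_sin_smul_of_hasDerivAt (hJ : ∀ v, J (J v) = -v) {K : ℝ} {x : ℝ → E}
    (hx : ∀ t, HasDerivAt x (-(K • J (x t))) t) (t : ℝ) :
    x t = cos (K * t) • x 0 - sin (K * t) • J (x 0) := by
  have hsol := ODE_solution_unique_univ (v := fun _ => ⇑(-(K • J))) (s := fun _ => univ)
    (t₀ := 0) (fun _ => (-(K • J)).lipschitz.lipschitzOnWith)
    (fun t => ⟨hx t, mem_univ _⟩)
    (fun t => ⟨hasDerivAt_cos_smul_sub_sin_smul hJ K (x 0) t, mem_univ _⟩) (by simp)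
  exact congrFun hsol t

theorem eq_zero_or_cos_eq_neg_one_of_cos_smul_sub_sin_smul_eq_neg {v : E} (hv : ⟪J v, v⟫ = 0)
    {θ : ℝ} (h : cos θ • v - sin θ • J v = -v) : v = 0 ∨ cos θ = -1 := by
  have hpair : (cos θ + 1) * ⟪v, v⟫ = 0 := by
    have := congrArg (⟪·, v⟫) h
    simp only [inner_sub_left, real_inner_smul_left, hv, inner_neg_left] at this
    linarith
  rcases mul_eq_zero.1 hpair with hcos | hvv
  · exact Or.inr (by linarith)
  · exact Or.inl (inner_self_eq_zero.1 hvv)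

end RotationFlow

theorem antiperiodic_kernel_trivial_general (n : ℕ) (T K : ℝ)
    (hK : ∀ k : ℤ, Odd k → K * T / (2 * Real.pi) ≠ (k : ℝ))
    (x : ℝ → Esp n) (hx : Differentiable ℝ x)
    (heq : ∀ t, -(Jc n (deriv x t)) + K • x t = 0)
    (hanti : ∀ t, x (t + T / 2) = -x t) :
    ∀ t, x t = 0 := by
  have hsol := eq_cos_smul_sub_sin_smul_of_hasDerivAt (Jc_Jc n)
    (hasDerivAt_of_neg_apply_deriv_add_smul_eq_zero (Jc_Jc n) hx heq)
  have hhalf : cos (K * (T / 2)) • x 0 - sin (K * (T / 2)) • Jc n (x 0) = -x 0 := by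
    rw [← hsol, ← hanti 0, zero_add]
  rcases eq_zero_or_cos_eq_neg_one_of_cos_smul_sub_sin_smul_eq_neg (inner_Jc_self n (x 0))
    hhalf with hx0 | hcos
  · intro t
    simp [hsol t, hx0]
  · obtain ⟨k, hk, hkπ⟩ := exists_odd_mul_pi_eq_of_cos_eq_neg_one hcos
    refine absurd ?_ (hK k hk)
    rw [div_eq_iff (by positivity)]
    linarith

/-- Kernel computation underlying Lemma 2.5: if `KT/(2π)` is not an odd integer, then the
only `T`-antiperiodic solution of `−Jẋ + Kx = 0` is `x ≡ 0`. -/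
theorem antiperiodic_kernel_trivial (n : ℕ) (T K : ℝ) (hT : 0 < T)
    (hK : ∀ k : ℤ, Odd k → K * T / (2 * Real.pi) ≠ (k : ℝ))
    (x : ℝ → Esp n) (hx : Differentiable ℝ x)
    (heq : ∀ t, -(Jc n (deriv x t)) + K • x t = 0)
    (hanti : ∀ t, x (t + T / 2) = -x t) :
    ∀ t, x t = 0 :=
  antiperiodic_kernel_trivial_general n T K hK x hx heq hanti

end
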